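/- Let A = cl(U₂) \ U₁ be a generalized annulus (U₁, U₂ open bounded, 0 ∈ U₁ ⊆ cl(U₁) ⊆ U₂), and let F: Ψ⁻¹(A) → ℝ² be continuous and 2π-periodic in the first variable, with v ∉ F(Ψ⁻¹(∂U₂)) and v ∉ F(Ψ⁻¹(∂U₁)). Then deg(F ∘ Ψ⁻¹, int A, v) = 𝔇(F, U₂, v) − 𝔇(F, U₁, v). -/

import Mathlib

noncomputable section

open Set Metric Bornology

/-- Clockwise polar coordinates `Ψ(θ, r) = (r cos θ, -r sin θ)`. -/
def PsiP (p : ℝ × ℝ) : ℝ × ℝ := (p.2 * Real.cos p.1, -(p.2 * Real.sin p.1))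

/-- The set `Ψ⁻¹(E)` in the open half-plane (points with positive radius mapping into `E`). -/
def preE (E : Set (ℝ × ℝ)) : Set (ℝ × ℝ) := {p : ℝ × ℝ | 0 < p.2 ∧ PsiP p ∈ E}

/-- `F` is `2π`-periodic in the first variable, on `Ψ⁻¹(E)`. -/
def PerOn (F : ℝ × ℝ → ℝ × ℝ) (E : Set (ℝ × ℝ)) : Prop :=
  ∀ p : ℝ × ℝ, p ∈ preE E → F (p.1 + 2 * Real.pi, p.2) = F p

/-- The rotation set `rot(F, E) = {F^θ(y)/(2π) : y ∈ Ψ⁻¹(E)}`. -/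
def rotSet (F : ℝ × ℝ → ℝ × ℝ) (E : Set (ℝ × ℝ)) : Set ℝ :=
  {t : ℝ | ∃ p ∈ preE E, t = (F p).1 / (2 * Real.pi)}

/-- `Σ(F, E) = ℤ ∩ conv (rot(F, E))`. -/
def SigmaSet (F : ℝ × ℝ → ℝ × ℝ) (E : Set (ℝ × ℝ)) : Set ℤ :=
  {n : ℤ | (n : ℝ) ∈ convexHull ℝ (rotSet F E)}

/-- `ν_i = (2πi, 0)`. -/
def nu (i : ℤ) : ℝ × ℝ := (2 * Real.pi * i, 0)

/-- A Brouwer degree theory on the plane, characterized by the classical axioms: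
normalization, dependence only on boundary values, homotopy invariance, additivity,
and the solution property. -/
structure DegTheory where
  deg : (ℝ × ℝ → ℝ × ℝ) → Set (ℝ × ℝ) → ℝ × ℝ → ℤ
  deg_id : ∀ (U : Set (ℝ × ℝ)) (v : ℝ × ℝ), IsOpen U → IsBounded U → v ∈ U →
    deg id U v = 1
  deg_congr : ∀ (g₁ g₂ : ℝ × ℝ → ℝ × ℝ) (U : Set (ℝ × ℝ)) (v : ℝ × ℝ),
    IsOpen U → IsBounded U → ContinuousOn g₁ (closure U) → ContinuousOn g₂ (closure U) →
    (∀ x ∈ frontier U, g₁ x = g₂ x) → (∀ x ∈ frontier U, g₁ x ≠ v) →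
    deg g₁ U v = deg g₂ U v
  deg_homotopy : ∀ (H : (ℝ × ℝ) × ℝ → ℝ × ℝ) (U : Set (ℝ × ℝ)) (v : ℝ × ℝ),
    IsOpen U → IsBounded U →
    ContinuousOn H ((closure U) ×ˢ Icc (0:ℝ) 1) →
    (∀ x ∈ frontier U, ∀ t ∈ Icc (0:ℝ) 1, H (x, t) ≠ v) →
    deg (fun x => H (x, 0)) U v = deg (fun x => H (x, 1)) U v
  deg_additive : ∀ (g : ℝ × ℝ → ℝ × ℝ) (U U₁ U₂ : Set (ℝ × ℝ)) (v : ℝ × ℝ),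
    IsOpen U → IsOpen U₁ → IsOpen U₂ → IsBounded U →
    U₁ ⊆ U → U₂ ⊆ U → Disjoint U₁ U₂ → ContinuousOn g (closure U) →
    (∀ x ∈ closure U \ (U₁ ∪ U₂), g x ≠ v) →
    deg g U v = deg g U₁ v + deg g U₂ v
  deg_exists : ∀ (g : ℝ × ℝ → ℝ × ℝ) (U : Set (ℝ × ℝ)) (v : ℝ × ℝ),
    IsOpen U → IsBounded U → ContinuousOn g (closure U) →
    deg g U v ≠ 0 → ∃ x ∈ U, g x = v

/-- `g : ℝ² → ℝ²` represents `F_ext ∘ Ψ⁻¹` for an admissible extension `F_ext` of `F`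
(`F` being defined on `Ψ⁻¹(∂U)`): `g` is continuous on the plane and agrees with
`F ∘ Ψ⁻¹` on `∂U`.  (Via `F_ext = g ∘ Ψ`, this is equivalent to the existence of a
continuous extension `F_ext` of `F` to the closed half-plane which is `2π`-periodic in
the first variable and constant on the line `r = 0`.) -/
def IsDExt (F : ℝ × ℝ → ℝ × ℝ) (U : Set (ℝ × ℝ)) (g : ℝ × ℝ → ℝ × ℝ) : Prop :=
  Continuous g ∧ ∀ p : ℝ × ℝ, p ∈ preE (frontier U) → g (PsiP p) = F p

/-- Euclidean open ball of radius `ρ` about the origin of the plane. -/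
def ball2 (ρ : ℝ) : Set (ℝ × ℝ) := {x : ℝ × ℝ | x.1 ^ 2 + x.2 ^ 2 < ρ ^ 2}

/-- Euclidean circle of radius `ρ` about the origin of the plane. -/
def sphere2 (ρ : ℝ) : Set (ℝ × ℝ) := {x : ℝ × ℝ | x.1 ^ 2 + x.2 ^ 2 = ρ ^ 2}

/-- Euclidean norm on the plane. -/
def sqnorm (x : ℝ × ℝ) : ℝ := Real.sqrt (x.1 ^ 2 + x.2 ^ 2)

/-- `Φ` is the (unique) lift, through the clockwise polar coordinates `Ψ`, of the
evolution map `φ` on `[0,T] × Ψ⁻¹(S)`: it is continuous, starts from the identity,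
projects to `φ` via `Ψ`, stays in the open half-plane, and is equivariant under the
deck transformation `θ ↦ θ + 2π`. -/
def IsLiftOn (φ : ℝ → ℝ × ℝ → ℝ × ℝ) (Φ : ℝ → ℝ × ℝ → ℝ × ℝ) (T : ℝ)
    (S : Set (ℝ × ℝ)) : Prop :=
  ContinuousOn (fun q : ℝ × (ℝ × ℝ) => Φ q.1 q.2) (Icc 0 T ×ˢ preE S) ∧
  (∀ p ∈ preE S, Φ 0 p = p) ∧
  (∀ t ∈ Icc 0 T, ∀ p ∈ preE S,
    PsiP (Φ t p) = φ t (PsiP p) ∧ 0 < (Φ t p).2 ∧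
    Φ t (p.1 + 2 * Real.pi, p.2) = ((Φ t p).1 + 2 * Real.pi, (Φ t p).2))

/-!
Glue `g₁` on `cl U₁` to `g` on the rest of `cl U₂`. Since the three maps all come from `F` on
`Ψ⁻¹(∂U₁ ∪ ∂U₂)`, the glued map `h` is continuous on `cl U₂`, agrees with `g` on `A`, with `g₁`
on `∂U₁` and with `g₂` on `∂U₂`, and misses `v` on `∂U₁ ∪ ∂U₂`. Additivity splits
`deg(h, U₂)` into `deg(h, U₁) + deg(h, U₂ \ cl U₁)`, and excision identifies the last term
with `deg(h, int A)`.
-/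

section Annulus

variable {X : Type*} [TopologicalSpace X] {U₁ U₂ : Set X}

lemma closure_inter_closure_compl_subset_closure_diff {s c : Set X} (hs : IsOpen s)
    (hc : IsClosed c) (hcs : c ⊆ s) : closure s ∩ closure cᶜ ⊆ closure (s \ c) := by
  rintro x ⟨hxs, hxc⟩
  by_cases hx : x ∈ s
  · exact hs.inter_closure ⟨hx, hxc⟩
  · have : x ∈ closure (cᶜ ∩ s) := hc.isOpen_compl.inter_closure ⟨fun h => hx (hcs h), hxs⟩
    rwa [inter_comm] at this

lemma annulus_diff_subset_frontier_union (hU₁ : IsOpen U₁) (hU₂ : IsOpen U₂) :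
    (closure U₂ \ U₁) \ (U₂ \ closure U₁) ⊆ frontier U₁ ∪ frontier U₂ := by
  rintro x ⟨⟨hx₂, hx₁⟩, hxV⟩
  rw [hU₁.frontier_eq, hU₂.frontier_eq]
  by_cases hxU₂ : x ∈ U₂
  · exact Or.inl ⟨not_not.mp fun h => hxV ⟨hxU₂, h⟩, hx₁⟩
  · exact Or.inr ⟨hx₂, hxU₂⟩

lemma diff_closure_subset_interior_annulus (hU₂ : IsOpen U₂) :
    U₂ \ closure U₁ ⊆ interior (closure U₂ \ U₁) :=
  interior_maximal (sdiff_subset_sdiff subset_closure subset_closure) (hU₂.sdiff isClosed_closure)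

lemma frontier_inner_subset_annulus (hU₁ : IsOpen U₁) (hsub : closure U₁ ⊆ U₂) :
    frontier U₁ ⊆ closure U₂ \ U₁ := by
  rw [hU₁.frontier_eq]
  exact sdiff_subset_sdiff_left (hsub.trans subset_closure)

lemma frontier_outer_subset_annulus (hU₂ : IsOpen U₂) (hsub : closure U₁ ⊆ U₂) :
    frontier U₂ ⊆ closure U₂ \ U₁ := by
  rw [hU₂.frontier_eq]
  exact sdiff_subset_sdiff_right (subset_closure.trans hsub)

end Annulus

namespace DegTheory

variable (D : DegTheory) {g : ℝ × ℝ → ℝ × ℝ} {U V : Set (ℝ × ℝ)} {v : ℝ × ℝ}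

lemma deg_empty : D.deg g ∅ v = 0 := by
  have h := D.deg_additive g ∅ ∅ ∅ v isOpen_empty isOpen_empty isOpen_empty isBounded_empty
    subset_rfl subset_rfl (disjoint_empty _) (by simp) (by simp)
  omega

lemma deg_excision (hU : IsOpen U) (hV : IsOpen V) (hUb : IsBounded U) (hVU : V ⊆ U)
    (hg : ContinuousOn g (closure U)) (hv : ∀ x ∈ closure U \ V, g x ≠ v) :
    D.deg g U v = D.deg g V v := by
  have h := D.deg_additive g U V ∅ v hU hV isOpen_empty hUb hVU (empty_subset _)
    (disjoint_empty _) hg (by simpa using hv)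
  rw [h, deg_empty, add_zero]

theorem deg_interior_annulus {U₁ U₂ : Set (ℝ × ℝ)} {g₁ g₂ : ℝ × ℝ → ℝ × ℝ}
    (hU₁ : IsOpen U₁) (hU₂ : IsOpen U₂) (hU₂b : IsBounded U₂) (hsub : closure U₁ ⊆ U₂)
    (hgc : ContinuousOn g (closure (interior (closure U₂ \ U₁))))
    (hg₁c : ContinuousOn g₁ (closure U₁)) (hg₂c : ContinuousOn g₂ (closure U₂))
    (hg₁ : EqOn g₁ g (frontier U₁)) (hg₂ : EqOn g₂ g (frontier U₂))
    (hv₁ : ∀ x ∈ frontier U₁, g x ≠ v) (hv₂ : ∀ x ∈ frontier U₂, g x ≠ v) :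
    D.deg g (interior (closure U₂ \ U₁)) v = D.deg g₂ U₂ v - D.deg g₁ U₁ v := by
  classical
  set A := closure U₂ \ U₁
  set V := U₂ \ closure U₁
  have hVA : V ⊆ interior A := diff_closure_subset_interior_annulus hU₂
  have hAV : A \ V ⊆ frontier U₁ ∪ frontier U₂ := annulus_diff_subset_frontier_union hU₁ hU₂
  have hcl : closure (interior A) ⊆ A :=
    closure_minimal interior_subset (isClosed_closure.sdiff hU₁)
  have hA₂ : closure (interior A) ⊆ closure U₂ := hcl.trans sdiff_subset
  have hU₁b : IsBounded U₁ := hU₂b.subset (subset_closure.trans hsub)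
  have hAb : IsBounded (interior A) := hU₂b.closure.subset (interior_subset.trans sdiff_subset)
  set h := (closure U₁).piecewise g₁ g
  have hhA : EqOn h g A := fun x hx => by
    by_cases hx₁ : x ∈ closure U₁
    · exact (piecewise_eq_of_mem _ _ _ hx₁).trans (hg₁ (hU₁.frontier_eq ▸ ⟨hx₁, hx.2⟩))
    · exact piecewise_eq_of_notMem _ _ _ hx₁
  have hhc : ContinuousOn h (closure U₂) := by
    refine ContinuousOn.piecewise (fun x hx => hg₁ (frontier_closure_subset hx.2)) ?_ ?_
    · exact hg₁c.mono (by rw [closure_closure]; exact inter_subset_right)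
    · refine hgc.mono (subset_trans ?_ (closure_mono hVA))
      exact closure_inter_closure_compl_subset_closure_diff hU₂ isClosed_closure hsub
  have hhv : ∀ x ∈ frontier U₁ ∪ frontier U₂, h x ≠ v := fun x hx => by
    have hxA : x ∈ A := union_subset (frontier_inner_subset_annulus hU₁ hsub)
      (frontier_outer_subset_annulus hU₂ hsub) hx
    rw [hhA hxA]
    exact hx.elim (hv₁ x) (hv₂ x)
  have hfrW : frontier (interior A) ⊆ A \ V := by
    rw [isOpen_interior.frontier_eq]
    exact fun x hx => ⟨hcl hx.1, fun hxV => hx.2 (hVA hxV)⟩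
  have hW : D.deg g (interior A) v = D.deg h V v := by
    rw [D.deg_congr g h _ v isOpen_interior hAb hgc (hhc.mono hA₂)
      (fun x hx => (hhA (hfrW hx).1).symm) fun x hx => (hAV (hfrW hx)).elim (hv₁ x) (hv₂ x)]
    exact D.deg_excision isOpen_interior (hU₂.sdiff isClosed_closure) hAb hVA (hhc.mono hA₂)
      fun x hx => hhv x (hAV ⟨hcl hx.1, hx.2⟩)
  have h₁ : D.deg h U₁ v = D.deg g₁ U₁ v :=
    D.deg_congr h g₁ U₁ v hU₁ hU₁b (hhc.mono (closure_mono (subset_closure.trans hsub))) hg₁c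
      (fun x hx => piecewise_eq_of_mem _ _ _ (frontier_subset_closure hx))
      fun x hx => hhv x (Or.inl hx)
  have h₂ : D.deg h U₂ v = D.deg g₂ U₂ v :=
    D.deg_congr h g₂ U₂ v hU₂ hU₂b hhc hg₂c
      (fun x hx => (hhA (frontier_outer_subset_annulus hU₂ hsub hx)).trans (hg₂ hx).symm)
      fun x hx => hhv x (Or.inr hx)
  have hadd : D.deg h U₂ v = D.deg h U₁ v + D.deg h V v :=
    D.deg_additive h U₂ U₁ V v hU₂ hU₁ (hU₂.sdiff isClosed_closure) hU₂b
      (subset_closure.trans hsub) sdiff_subset (disjoint_sdiff_right.mono_left subset_closure) hhc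
      fun x hx => hhv x (hAV (by rwa [sdiff_sdiff]))
  omega

end DegTheory

lemma exists_psiP_eq {x : ℝ × ℝ} (hx : x ≠ 0) : ∃ p : ℝ × ℝ, 0 < p.2 ∧ PsiP p = x := by
  set z : ℂ := Complex.equivRealProd.symm x
  have hz : z ≠ 0 := by simpa [z, Complex.ext_iff, Prod.ext_iff] using hx
  refine ⟨(-Complex.arg z, ‖z‖), norm_pos_iff.mpr hz, ?_⟩
  simp [PsiP, Complex.norm_mul_cos_arg, Complex.norm_mul_sin_arg, z]

lemma IsDExt.eqOn_frontier {F g g' : ℝ × ℝ → ℝ × ℝ} {U E : Set (ℝ × ℝ)} (hg' : IsDExt F U g')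
    (hE : frontier U ⊆ E) (h0 : (0 : ℝ × ℝ) ∉ frontier U)
    (hgF : ∀ p ∈ preE E, g (PsiP p) = F p) : EqOn g' g (frontier U) := by
  intro x hx
  obtain ⟨p, hp, rfl⟩ := exists_psiP_eq (ne_of_mem_of_not_mem hx h0)
  rw [hg'.2 p ⟨hp, hx⟩, hgF p ⟨hp, hE hx⟩]

lemma apply_ne_of_preE {F g : ℝ × ℝ → ℝ × ℝ} {S E : Set (ℝ × ℝ)} {v : ℝ × ℝ} (hS : S ⊆ E)
    (h0 : (0 : ℝ × ℝ) ∉ S) (hgF : ∀ p ∈ preE E, g (PsiP p) = F p)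
    (hv : ∀ p ∈ preE S, F p ≠ v) : ∀ x ∈ S, g x ≠ v := by
  intro x hx
  obtain ⟨p, hp, rfl⟩ := exists_psiP_eq (ne_of_mem_of_not_mem hx h0)
  rw [hgF p ⟨hp, hS hx⟩]
  exact hv p ⟨hp, hx⟩

theorem statement8_general (D : DegTheory) (U₁ U₂ : Set (ℝ × ℝ)) (F : ℝ × ℝ → ℝ × ℝ)
    (v : ℝ × ℝ)
    (hU₁ : IsOpen U₁) (hU₂ : IsOpen U₂) (hU₂b : IsBounded U₂)
    (h0 : (0 : ℝ × ℝ) ∈ U₁) (hsub : closure U₁ ⊆ U₂)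
    (hv₂ : ∀ p ∈ preE (frontier U₂), F p ≠ v)
    (hv₁ : ∀ p ∈ preE (frontier U₁), F p ≠ v)
    (g g₁ g₂ : ℝ × ℝ → ℝ × ℝ)
    (hgc : ContinuousOn g (closure (interior (closure U₂ \ U₁))))
    (hgF : ∀ p ∈ preE (closure U₂ \ U₁), g (PsiP p) = F p)
    (hg₁ : IsDExt F U₁ g₁) (hg₂ : IsDExt F U₂ g₂) :
    D.deg g (interior (closure U₂ \ U₁)) v = D.deg g₂ U₂ v - D.deg g₁ U₁ v := by
  have hA₁ := frontier_inner_subset_annulus hU₁ hsub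
  have hA₂ := frontier_outer_subset_annulus hU₂ hsub
  have h0₁ : (0 : ℝ × ℝ) ∉ frontier U₁ := fun h => (hU₁.frontier_eq ▸ h).2 h0
  have h0₂ : (0 : ℝ × ℝ) ∉ frontier U₂ := fun h =>
    (hU₂.frontier_eq ▸ h).2 (hsub (subset_closure h0))
  exact D.deg_interior_annulus hU₁ hU₂ hU₂b hsub hgc hg₁.1.continuousOn hg₂.1.continuousOn
    (hg₁.eqOn_frontier hA₁ h0₁ hgF) (hg₂.eqOn_frontier hA₂ h0₂ hgF)
    (apply_ne_of_preE hA₁ h0₁ hgF hv₁) (apply_ne_of_preE hA₂ h0₂ hgF hv₂)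

/-- for a generalized annulus `A = cl(U₂) \ U₁` and `F` continuous and
`2π`-periodic on `Ψ⁻¹(A)` avoiding `v` on `Ψ⁻¹(∂U₁)` and `Ψ⁻¹(∂U₂)`,
`deg(F ∘ Ψ⁻¹, int A, v) = 𝔇(F, U₂, v) - 𝔇(F, U₁, v)`.
Here `g` represents `F ∘ Ψ⁻¹` on `A` and `g₁, g₂` are admissible extensions. -/
theorem statement8 (D : DegTheory) (U₁ U₂ : Set (ℝ × ℝ)) (F : ℝ × ℝ → ℝ × ℝ)
    (v : ℝ × ℝ)
    (hU₁ : IsOpen U₁) (hU₂ : IsOpen U₂) (hU₂b : IsBounded U₂)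
    (h0 : (0 : ℝ × ℝ) ∈ U₁) (hsub : closure U₁ ⊆ U₂)
    (hFc : ContinuousOn F (preE (closure U₂ \ U₁)))
    (hFper : PerOn F (closure U₂ \ U₁))
    (hv₂ : ∀ p ∈ preE (frontier U₂), F p ≠ v)
    (hv₁ : ∀ p ∈ preE (frontier U₁), F p ≠ v)
    (g g₁ g₂ : ℝ × ℝ → ℝ × ℝ)
    (hgc : ContinuousOn g (closure (interior (closure U₂ \ U₁))))
    (hgF : ∀ p ∈ preE (closure U₂ \ U₁), g (PsiP p) = F p)
    (hg₁ : IsDExt F U₁ g₁) (hg₂ : IsDExt F U₂ g₂) :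
    D.deg g (interior (closure U₂ \ U₁)) v = D.deg g₂ U₂ v - D.deg g₁ U₁ v :=
  statement8_general D U₁ U₂ F v hU₁ hU₂ hU₂b h0 hsub hv₂ hv₁ g g₁ g₂ hgc hgF hg₁ hg₂
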